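/- The Taylor series identity arccos(x) = π/2 − Σ_{l=0}^∞ ((2l−1)!!/(2l)!!) · x^{2l+1}/(2l+1) holds for all x ∈ [−1, 1]. -/

import Mathlib

/-!
By the binomial series, `1 / √(1 - x²) = ∑ ((2l-1)!!/(2l)!!) x^(2l)` for `|x| < 1`. Integrating
termwise gives a series with the same derivative as `arcsin` and the same value at `0`, so the
two agree on `(-1, 1)`. Since `((2l-1)!!/(2l)!!)² (2l+1) ≤ 1`, the integrated series is dominated
by `(l+1)^(-3/2)` on `[-1, 1]`, hence continuous there, and the identity extends to `±1`.
Finally `arccos x = π/2 - arcsin x`.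
-/

open Real Polynomial Set
open scoped Nat

noncomputable def doubleFactorialRatio (l : ℕ) : ℝ :=
  ((2 * l - 1)‼ : ℝ) / ((2 * l)‼ : ℝ)

lemma doubleFactorialRatio_pos (l : ℕ) : 0 < doubleFactorialRatio l := by
  unfold doubleFactorialRatio
  exact div_pos (mod_cast Nat.doubleFactorial_pos _) (mod_cast Nat.doubleFactorial_pos _)

lemma doubleFactorialRatio_zero : doubleFactorialRatio 0 = 1 := by simp [doubleFactorialRatio]

lemma doubleFactorialRatio_succ (l : ℕ) :
    doubleFactorialRatio (l + 1) = doubleFactorialRatio l * (2 * l + 1) / (2 * l + 2) := by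
  have h0 : ((2 * l)‼ : ℝ) ≠ 0 := mod_cast (Nat.doubleFactorial_pos _).ne'
  rw [doubleFactorialRatio, doubleFactorialRatio, show 2 * (l + 1) - 1 = 2 * l + 1 by omega,
    show 2 * (l + 1) = 2 * l + 2 by omega, Nat.doubleFactorial_add_one, Nat.doubleFactorial_add_two]
  push_cast
  field_simp

lemma doubleFactorialRatio_sq_mul_le_one (l : ℕ) :
    doubleFactorialRatio l ^ 2 * (2 * l + 1) ≤ 1 := by
  induction l with
  | zero => simp [doubleFactorialRatio_zero]
  | succ n ih =>
    have hstep : doubleFactorialRatio (n + 1) ^ 2 * (2 * ↑(n + 1) + 1) =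
        doubleFactorialRatio n ^ 2 * (2 * n + 1) *
          ((2 * n + 1) * (2 * n + 3) / (2 * n + 2) ^ 2) := by
      rw [doubleFactorialRatio_succ]; push_cast; field_simp; ring
    have hfactor : (2 * (n : ℝ) + 1) * (2 * n + 3) / (2 * n + 2) ^ 2 ≤ 1 := by
      rw [div_le_one (by positivity)]; nlinarith
    rw [hstep]
    exact mul_le_one₀ ih (by positivity) hfactor

lemma doubleFactorialRatio_le_one (l : ℕ) : doubleFactorialRatio l ≤ 1 := by
  nlinarith [doubleFactorialRatio_pos l, doubleFactorialRatio_sq_mul_le_one l]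

lemma doubleFactorialRatio_mul_sqrt_le_one (l : ℕ) :
    doubleFactorialRatio l * √(2 * l + 1) ≤ 1 := by
  rw [← abs_of_pos (doubleFactorialRatio_pos l), ← sqrt_sq_eq_abs, ← sqrt_mul (sq_nonneg _)]
  exact sqrt_le_one.2 (doubleFactorialRatio_sq_mul_le_one l)

lemma summable_doubleFactorialRatio_div :
    Summable fun l : ℕ => doubleFactorialRatio l / (2 * l + 1) := by
  refine ((summable_one_div_nat_add_rpow 1 (3 / 2)).2 (by norm_num)).of_nonneg_of_le
    (fun l => (div_pos (doubleFactorialRatio_pos l) (by positivity)).le) fun l => ?_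
  have hpow : |(l : ℝ) + 1| ^ (3 / 2 : ℝ) = (l + 1) * √(l + 1) := by
    rw [abs_of_pos (by positivity), show (3 / 2 : ℝ) = 1 + 1 / 2 by norm_num,
      rpow_add (by positivity), rpow_one, sqrt_eq_rpow]
  rw [hpow]
  calc doubleFactorialRatio l / (2 * l + 1)
      ≤ 1 / ((2 * l + 1) * √(2 * l + 1)) := by
        rw [div_le_div_iff₀ (by positivity) (by positivity)]
        nlinarith [doubleFactorialRatio_mul_sqrt_le_one l]
    _ ≤ 1 / ((l + 1) * √(l + 1)) := by gcongr <;> linarith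

lemma ascPochhammer_eval_half_div_factorial (n : ℕ) :
    (ascPochhammer ℝ n).eval (1 / 2) / n ! = doubleFactorialRatio n := by
  induction n with
  | zero => simp [doubleFactorialRatio_zero]
  | succ n ih =>
    rw [ascPochhammer_succ_eval, doubleFactorialRatio_succ, ← ih, Nat.factorial_succ]
    push_cast
    field_simp
    ring

lemma choose_half_add_sub_one (n : ℕ) :
    Ring.choose ((1 / 2 : ℝ) + n - 1) n = doubleFactorialRatio n := by
  rw [Ring.choose_eq_smul, descPochhammer_smeval_eq_ascPochhammer, ascPochhammer_smeval_eq_eval,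
    ← ascPochhammer_eval_half_div_factorial, smul_eq_mul, inv_mul_eq_div]
  ring_nf

lemma hasSum_doubleFactorialRatio_mul_pow {y : ℝ} (hy : |y| < 1) :
    HasSum (fun l => doubleFactorialRatio l * y ^ l) (1 / √(1 - y)) := by
  have h := (one_div_one_sub_rpow_hasFPowerSeriesOnBall_zero (1 / 2)).hasSum
    (y := y) (by simpa [edist_dist] using hy)
  simp only [FormalMultilinearSeries.ofScalars_apply_eq, choose_half_add_sub_one, zero_add,
    smul_eq_mul] at h
  rwa [← sqrt_eq_rpow] at h

noncomputable def arcsinTerm (l : ℕ) (x : ℝ) : ℝ :=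
  doubleFactorialRatio l * x ^ (2 * l + 1) / (2 * l + 1)

noncomputable def arcsinSeries (x : ℝ) : ℝ := ∑' l, arcsinTerm l x

lemma hasDerivAt_arcsinTerm (l : ℕ) (x : ℝ) :
    HasDerivAt (arcsinTerm l) (doubleFactorialRatio l * (x ^ 2) ^ l) x := by
  have h : HasDerivAt (arcsinTerm l) _ x :=
    ((hasDerivAt_pow (2 * l + 1) x).const_mul _).div_const _
  refine h.congr_deriv ?_
  rw [Nat.add_sub_cancel, ← pow_mul]
  push_cast
  field_simp

lemma norm_arcsinTerm_le {x : ℝ} (hx : |x| ≤ 1) (l : ℕ) :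
    ‖arcsinTerm l x‖ ≤ doubleFactorialRatio l / (2 * l + 1) := by
  rw [arcsinTerm, norm_div, norm_mul, norm_pow, Real.norm_eq_abs, Real.norm_eq_abs,
    Real.norm_eq_abs, abs_of_pos (doubleFactorialRatio_pos l),
    abs_of_pos (by positivity : (0 : ℝ) < 2 * l + 1)]
  refine div_le_div_of_nonneg_right ?_ (by positivity)
  exact mul_le_of_le_one_right (doubleFactorialRatio_pos l).le (pow_le_one₀ (abs_nonneg x) hx)

lemma summable_arcsinTerm {x : ℝ} (hx : |x| ≤ 1) : Summable fun l => arcsinTerm l x :=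
  .of_norm_bounded summable_doubleFactorialRatio_div (norm_arcsinTerm_le hx)

lemma continuousOn_arcsinSeries : ContinuousOn arcsinSeries (Icc (-1) 1) :=
  continuousOn_tsum (fun l => (by unfold arcsinTerm; fun_prop)) summable_doubleFactorialRatio_div
    fun l _ hx => norm_arcsinTerm_le (abs_le.2 hx) l

lemma hasDerivAt_arcsinSeries {x : ℝ} (hx : |x| < 1) :
    HasDerivAt arcsinSeries (1 / √(1 - x ^ 2)) x := by
  obtain ⟨r, hxr, hr⟩ := exists_between hx
  have hderiv := hasDerivAt_tsum_of_isPreconnected (t := Ioo (-r) r) (y₀ := 0)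
    (summable_geometric_of_lt_one (sq_nonneg r) (by nlinarith [abs_nonneg x]))
    isOpen_Ioo isPreconnected_Ioo (fun l y _ => hasDerivAt_arcsinTerm l y)
    (fun l y hy => ?bound) (by constructor <;> linarith [abs_nonneg x])
    (by simp [arcsinTerm]) (abs_lt.1 hxr)
  case bound =>
    have hyr : y ^ 2 ≤ r ^ 2 := sq_le_sq' hy.1.le hy.2.le
    rw [norm_mul, norm_pow, Real.norm_eq_abs, Real.norm_eq_abs,
      abs_of_pos (doubleFactorialRatio_pos l), abs_of_nonneg (sq_nonneg y)]
    exact (mul_le_of_le_one_left (by positivity) (doubleFactorialRatio_le_one l)).trans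
      (pow_le_pow_left₀ (sq_nonneg y) hyr l)
  have hx2 : |x ^ 2| < 1 := by rw [abs_pow]; exact pow_lt_one₀ (abs_nonneg x) hx two_ne_zero
  rwa [(hasSum_doubleFactorialRatio_mul_pow hx2).tsum_eq] at hderiv

lemma arcsinSeries_eqOn_Ioo : EqOn arcsinSeries arcsin (Ioo (-1) 1) := by
  have hseries {y : ℝ} (hy : y ∈ Ioo (-1 : ℝ) 1) := hasDerivAt_arcsinSeries (abs_lt.2 hy)
  have harcsin {y : ℝ} (hy : y ∈ Ioo (-1 : ℝ) 1) := hasDerivAt_arcsin hy.1.ne' hy.2.ne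
  refine isOpen_Ioo.eqOn_of_deriv_eq isPreconnected_Ioo
    (fun y hy => (hseries hy).differentiableAt.differentiableWithinAt)
    (fun y hy => (harcsin hy).differentiableAt.differentiableWithinAt)
    (fun y hy => (hseries hy).deriv.trans (harcsin hy).deriv.symm)
    (x := 0) (by norm_num) ?_
  simp [arcsinSeries, arcsinTerm]

lemma arcsinSeries_eqOn_Icc : EqOn arcsinSeries arcsin (Icc (-1) 1) :=
  arcsinSeries_eqOn_Ioo.of_subset_closure continuousOn_arcsinSeries continuous_arcsin.continuousOn
    Ioo_subset_Icc_self (closure_Ioo (by norm_num)).ge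

lemma hasSum_arcsinTerm {x : ℝ} (hx : x ∈ Icc (-1 : ℝ) 1) :
    HasSum (fun l => arcsinTerm l x) (arcsin x) :=
  (summable_arcsinTerm (abs_le.2 hx)).hasSum_iff.2 (arcsinSeries_eqOn_Icc hx)

/-- Taylor series of arccos: arccos x = π/2 − Σ_{l≥0} ((2l−1)!!/(2l)!!) x^{2l+1}/(2l+1), |x| ≤ 1. -/
theorem arccos_taylor_series (x : ℝ) (hx : x ∈ Set.Icc (-1 : ℝ) 1) :
    HasSum (fun l : ℕ => ((2 * l - 1)‼ : ℝ) / ((2 * l)‼ : ℝ) * x ^ (2 * l + 1) / (2 * l + 1))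
      (π / 2 - arccos x) := by
  rw [← arcsin_eq_pi_div_two_sub_arccos]
  exact hasSum_arcsinTerm hx
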